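/- arXiv:0708.2572 — 2 statements merged into one kernel-verified Lean document; each statement's English description precedes it below -/
import Mathlib

section
/- For even m ≥ 6, the coefficient of q^4 in d_m(q) equals (m-2)(m+2)(m-3)/6. -/
open Polynomial

/-- The q-derangement polynomial, defined by the recursion
`d_n(q) = (1+q+⋯+q^{n-1}) d_{n-1}(q) + (-1)^n q^{C(n,2)}` for `n ≥ 2`, with `d_1(q) = 0`. -/
noncomputable def dq : ℕ → Polynomial ℤ
  | 0 => 0
  | 1 => 0
  | (n + 2) =>
      (∑ i ∈ Finset.range (n + 2), X ^ i) * dq (n + 1)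
        + (-1) ^ (n + 2) * X ^ ((n + 2).choose 2)

/-- `A n k` is the coefficient of `q^k` in `d_n(q)`. -/
noncomputable def A (n k : ℕ) : ℤ := (dq n).coeff k

/-! For `2 ≤ n` and `k ≤ n` the sign term `± q^C(n+1,2)` of the recursion lies above degree `k`,
and multiplying by `1 + q + ⋯ + q^n` replaces coefficients by partial sums, so
`A (n+1) k = ∑_{i ≤ k} A n i`.
Starting from `A n 0 = 0` and `A n 1 = 1`, summing in `n` yields the coefficients of `q^2`, `q^3`, `q^4`
as polynomials in `n` of degrees 1, 2, 3, anchored at the explicit `d_2`, `d_3`, `d_4`. -/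

open Finset

lemma coeff_geomSum_mul {R : Type*} [Semiring R] (p : R[X]) {N k : ℕ} (hk : k < N) :
    ((∑ i ∈ range N, (X : R[X]) ^ i) * p).coeff k = ∑ i ∈ range (k + 1), p.coeff i := by
  rw [coeff_mul, Nat.sum_antidiagonal_eq_sum_range_succ
    (fun i j => (∑ l ∈ range N, (X : R[X]) ^ l).coeff i * p.coeff j), ← sum_range_reflect]
  refine sum_congr rfl fun i hi => ?_
  have hi : i < k + 1 := mem_range.mp hi
  simp only [finsetSum_coeff, coeff_X_pow, sum_ite_eq, mem_range]
  rw [if_pos (by omega), one_mul]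
  congr 1
  omega

lemma dq_two : dq 2 = X := by
  simp [dq]

lemma dq_three : dq 3 = X + X ^ 2 := by
  rw [dq, dq_two]
  simp only [sum_range_succ, range_one, sum_singleton, Nat.choose]
  ring

lemma dq_four : dq 4 = X + 2 * X ^ 2 + 2 * X ^ 3 + 2 * X ^ 4 + X ^ 5 + X ^ 6 := by
  rw [dq, dq_three]
  simp only [sum_range_succ, range_one, sum_singleton, Nat.choose]
  ring

lemma A_succ (k : ℕ) {n : ℕ} (hn : 2 ≤ n) (hk : k ≤ n) :
    A (n + 1) k = ∑ i ∈ range (k + 1), A n i := by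
  obtain ⟨m, rfl⟩ : ∃ m, n = m + 1 := ⟨n - 1, by omega⟩
  have hchoose : k < (m + 2).choose 2 := by
    have hpos := Nat.choose_pos (n := m + 1) (k := 2) (by omega)
    have hpascal : (m + 2).choose 2 = (m + 1) + (m + 1).choose 2 := by
      rw [Nat.choose_succ_succ', Nat.choose_one_right]
    omega
  simp only [A, dq, coeff_add, coeff_geomSum_mul _ (Nat.lt_succ_of_le hk)]
  rw [← C_1, ← C_neg, ← C_pow, coeff_C_mul_X_pow, if_neg hchoose.ne, add_zero]

lemma A_zero (n : ℕ) : A n 0 = 0 := by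
  induction n with
  | zero => simp [A, dq]
  | succ n ih =>
    rcases Nat.lt_or_ge n 2 with hn | hn
    · interval_cases n <;> simp [A, dq]
    · simp [A_succ 0 hn (Nat.zero_le n), ih]

lemma A_one {n : ℕ} (hn : 2 ≤ n) : A n 1 = 1 := by
  induction n, hn using Nat.le_induction with
  | base => simp [A, dq_two]
  | succ n hn ih => simp [A_succ 1 hn (by omega), sum_range_succ, A_zero, ih]

lemma A_two {n : ℕ} (hn : 2 ≤ n) : A n 2 = n - 2 := by
  induction n, hn using Nat.le_induction with
  | base => simp [A, dq_two, coeff_X]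
  | succ n hn ih =>
    simp only [A_succ 2 hn (by omega), sum_range_succ, range_one, sum_singleton, A_zero,
      A_one hn, ih]
    push_cast
    ring

lemma A_three {n : ℕ} (hn : 3 ≤ n) : (A n 3 : ℚ) = n * (n - 3) / 2 := by
  induction n, hn using Nat.le_induction with
  | base => simp [A, dq_three, coeff_X]
  | succ n hn ih =>
    simp only [A_succ 3 (by omega) hn, sum_range_succ, range_one, sum_singleton,
      A_zero, A_one (by omega : 2 ≤ n), A_two (by omega : 2 ≤ n)]
    push_cast [ih]
    ring

lemma A_four {n : ℕ} (hn : 4 ≤ n) : (A n 4 : ℚ) = (n - 2) * (n + 2) * (n - 3) / 6 := by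
  induction n, hn using Nat.le_induction with
  | base => norm_num [A, dq_four, coeff_X]
  | succ n hn ih =>
    simp only [A_succ 4 (by omega) hn, sum_range_succ, range_one, sum_singleton,
      A_zero, A_one (by omega : 2 ≤ n), A_two (by omega : 2 ≤ n)]
    push_cast [ih, A_three (by omega : 3 ≤ n)]
    ring

theorem stmt_9_general (m : ℕ) (hm : 6 ≤ m) :
    (A m 4 : ℚ) = ((m : ℚ) - 2) * ((m : ℚ) + 2) * ((m : ℚ) - 3) / 6 :=
  A_four (by omega)

theorem stmt_9 (m : ℕ) (hm : 6 ≤ m) (he : Even m) :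
    (A m 4 : ℚ) = ((m : ℚ) - 2) * ((m : ℚ) + 2) * ((m : ℚ) - 3) / 6 :=
  stmt_9_general m hm
end

section
/- For even m ≥ 6, with β_m = binom(m,2), the coefficient of q^{β_m - 3} in d_m(q) equals m³/12 - m²/8 - m/12 - 1. -/
open Polynomial

/-!
Write `B n = n.choose 2`, which bounds the degree of `d_n`. Since `1 + q + ⋯ + q^n` has degree `n`,
for `j < n` the coefficient of `q^(B (n+1) - j)` in `d_(n+1)` is the sum of the top `j + 1`
coefficients of `d_n`, plus the sign `(-1)^(n+1)` when `j = 0`. So the top four coefficients obey a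
triangular recursion in `n`, whose solutions are polynomials in `n` corrected by multiples of
`(-1)^n`; they are checked by induction starting from `d_4`.
-/

open Finset

lemma choose_two_succ (n : ℕ) : (n + 1).choose 2 = n.choose 2 + n := by
  rw [Nat.choose_succ_succ, Nat.choose_one_right, add_comm]

lemma dq_succ {n : ℕ} (hn : 1 ≤ n) :
    dq (n + 1) = (∑ i ∈ range (n + 1), X ^ i) * dq n + (-1) ^ (n + 1) * X ^ ((n + 1).choose 2) := by
  obtain ⟨k, rfl⟩ := Nat.exists_eq_add_of_le' hn
  rw [dq]

lemma natDegree_dq_le (n : ℕ) : (dq n).natDegree ≤ n.choose 2 := by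
  induction n with
  | zero => simp [dq]
  | succ n ih =>
    rcases Nat.eq_zero_or_pos n with rfl | hn
    · simp [dq]
    rw [dq_succ hn, choose_two_succ]
    refine natDegree_add_le_of_degree_le ?_ ?_
    · refine (natDegree_mul_le_of_le (natDegree_sum_le_of_forall_le _ _ fun i hi => ?_) ih).trans
        (add_comm _ _).le
      exact (natDegree_X_pow_le i).trans (Nat.lt_succ_iff.mp (mem_range.mp hi))
    · compute_degree

lemma coeff_dq_eq_zero {n k : ℕ} (hk : n.choose 2 < k) : (dq n).coeff k = 0 :=
  coeff_eq_zero_of_natDegree_lt ((natDegree_dq_le n).trans_lt hk)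

lemma A_succ_choose_two_sub {n j : ℕ} (hn : 1 ≤ n) (hj : j < n) :
    A (n + 1) ((n + 1).choose 2 - j) =
      ∑ i ∈ range (j + 1), A n (n.choose 2 - i) + if j = 0 then (-1) ^ (n + 1) else 0 := by
  have hB : n - 1 ≤ n.choose 2 := by
    obtain ⟨k, rfl⟩ := Nat.exists_eq_add_of_le' hn
    rw [choose_two_succ]; omega
  rw [A, dq_succ hn, coeff_add, sum_mul, finsetSum_coeff, choose_two_succ]
  congr 1
  · simp_rw [coeff_X_pow_mul']
    rw [← sum_range_reflect, ← sum_range_add_sum_Ico _ (show j + 1 ≤ n + 1 by omega),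
      sum_eq_zero (s := Ico _ _), add_zero, ← sum_range_reflect]
    · refine sum_congr rfl fun i hi => ?_
      rw [mem_range] at hi
      rw [if_pos (by omega), A]
      congr 1
      omega
    · intro i hi
      rw [mem_Ico] at hi
      split_ifs
      · exact coeff_dq_eq_zero (by omega)
      · rfl
  · rw [show ((-1 : ℤ[X]) ^ (n + 1)) = C ((-1) ^ (n + 1)) by simp, coeff_C_mul, coeff_X_pow]
    have hB' : n.choose 2 + n - j = n.choose 2 + n ↔ j = 0 := by omega
    simp only [hB']
    split_ifs <;> simp

lemma A_choose_two_sub {n : ℕ} (hn : 4 ≤ n) :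
    (A n (n.choose 2) : ℚ) = (1 + (-1) ^ n) / 2 ∧
    (A n (n.choose 2 - 1) : ℚ) = (2 * n - 3 - (-1) ^ n) / 4 ∧
    (A n (n.choose 2 - 2) : ℚ) = n ^ 2 / 4 - n / 2 + (1 - (-1) ^ n) / 8 ∧
    (A n (n.choose 2 - 3) : ℚ) = n ^ 3 / 12 - n ^ 2 / 8 - n / 12 - 1 + (1 - (-1) ^ n) / 16 := by
  induction n, hn using Nat.le_induction with
  | base => norm_num [A, dq_four, Nat.choose, coeff_X, coeff_X_pow]
  | succ n hn ih =>
    obtain ⟨h0, h1, h2, h3⟩ := ih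
    have step (j : ℕ) (hj : j ≤ 3) := A_succ_choose_two_sub (n := n) (j := j) (by omega) (by omega)
    have step0 := step 0 (by norm_num)
    rw [Nat.sub_zero] at step0
    simp only [step0, step 1 (by norm_num), step 2 (by norm_num), step 3 (by norm_num),
      sum_range_succ, sum_range_zero, Nat.sub_zero, reduceIte, OfNat.ofNat_ne_zero, one_ne_zero]
    push_cast
    rw [h0, h1, h2, h3]
    refine ⟨?_, ?_, ?_, ?_⟩ <;> ring

theorem stmt_12 (m : ℕ) (hm : 6 ≤ m) (he : Even m) :
    (A m (m.choose 2 - 3) : ℚ) =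
      (m : ℚ) ^ 3 / 12 - (m : ℚ) ^ 2 / 8 - (m : ℚ) / 12 - 1 := by
  rw [(A_choose_two_sub (by omega)).2.2.2, he.neg_one_pow]
  ring
end
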